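/- For n ≥ 4, the number of permutations of {1,…,n} avoiding all six patterns in T_4^2 = {2134, 2143, 2314, 2341, 2413, 2431} equals 2·3^(n-2). -/

import Mathlib

/-- An occurrence of the pattern `τ` in `α` at the strictly increasing
index sequence `f`: the subsequence `α ∘ f` is order-isomorphic to `τ`. -/
def PattOccursAt {k n : ℕ} (τ : Equiv.Perm (Fin k)) (α : Equiv.Perm (Fin n))
    (f : Fin k → Fin n) : Prop :=
  StrictMono f ∧ ∀ i j : Fin k, τ i < τ j ↔ α (f i) < α (f j)

/-- `α` contains the pattern `τ`. -/
def Contains {k n : ℕ} (τ : Equiv.Perm (Fin k)) (α : Equiv.Perm (Fin n)) : Prop :=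
  ∃ f, PattOccursAt τ α f

/-- `α` avoids the pattern `τ`. -/
def Avoids {k n : ℕ} (τ : Equiv.Perm (Fin k)) (α : Equiv.Perm (Fin n)) : Prop :=
  ¬ Contains τ α

/-- `α` contains the pattern `τ` exactly once. -/
def ContainsExactlyOnce {k n : ℕ} (τ : Equiv.Perm (Fin k)) (α : Equiv.Perm (Fin n)) : Prop :=
  ∃! f, PattOccursAt τ α f

/-- `T_k^m`: the permutations `σ` of length `k` with first entry `σ(1) = m`
(one-based; in `Fin k` terms, `(σ 0) + 1 = m`). -/
def Tkm (k m : ℕ) : Set (Equiv.Perm (Fin k)) :=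
  {σ | ∀ i : Fin k, (i : ℕ) = 0 → (σ i : ℕ) + 1 = m}

/-!
A permutation avoids every pattern `2abc` iff no entry is followed both by a smaller entry and by
two larger ones: the standardization of four such positions starts with `2`, and conversely an
occurrence of a pattern of `T_4^2` exhibits such an entry. Split a permutation of length `n + 1`
into its first value `p` and the permutation `β` of length `n` standardizing the rest. The
condition then holds iff it holds for `β` and `p` is the smallest, the second largest or the
largest value, so the count triples at each step from the two permutations of length `2`.
-/

theorem exists_pattOccursAt {k n : ℕ} (α : Equiv.Perm (Fin n)) {f : Fin k → Fin n}
    (hf : StrictMono f) : ∃ τ : Equiv.Perm (Fin k), PattOccursAt τ α f := by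
  set σ := Tuple.sort (α ∘ f)
  have hmono : StrictMono (α ∘ f ∘ σ) :=
    (Tuple.monotone_sort (α ∘ f)).strictMono_of_injective
      (α.injective.comp (hf.injective.comp σ.injective))
  refine ⟨σ.symm, hf, fun i j => ?_⟩
  simpa using (hmono.lt_iff_lt (a := σ.symm i) (b := σ.symm j)).symm

def NoBelowTwoAboveAt {n : ℕ} (α : Equiv.Perm (Fin n)) (i : Fin n) : Prop :=
  ∀ a b c, i < a → i < b → i < c → α a < α i → α i < α b → α i < α c → b = c

def NoBelowTwoAbove {n : ℕ} (α : Equiv.Perm (Fin n)) : Prop :=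
  ∀ i, NoBelowTwoAboveAt α i

theorem exists_mem_Tkm_contains {n : ℕ} {α : Equiv.Perm (Fin n)} {i a b c : Fin n}
    (hia : i < a) (hib : i < b) (hic : i < c) (ha : α a < α i) (hb : α i < α b)
    (hc : α i < α c) (hbc : b ≠ c) : ∃ τ ∈ Tkm 4 2, Contains τ α := by
  have hab : a ≠ b := fun h => (ha.trans hb).ne (congrArg α h)
  have hac : a ≠ c := fun h => (ha.trans hc).ne (congrArg α h)
  have hs : ({i, a, b, c} : Finset (Fin n)).card = 4 := by
    rw [Finset.card_insert_of_notMem, Finset.card_insert_of_notMem, Finset.card_pair hbc]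
    · simp [hab, hac]
    · simp [hia.ne, hib.ne, hic.ne]
  set f := Finset.orderEmbOfFin _ hs
  have hf0 : f 0 = i := by
    refine (Finset.orderEmbOfFin_zero hs (by norm_num)).trans (le_antisymm ?_ ?_)
    · exact Finset.min'_le _ _ (by simp)
    · simp [hia.le, hib.le, hic.le]
  have hrange (x) (hx : x ∈ ({i, a, b, c} : Finset (Fin n))) : ∃ j, f j = x := by
    rw [← Finset.mem_coe, ← Finset.range_orderEmbOfFin _ hs] at hx
    exact hx
  obtain ⟨ja, hja⟩ := hrange a (by simp)
  obtain ⟨jb, hjb⟩ := hrange b (by simp)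
  obtain ⟨jc, hjc⟩ := hrange c (by simp)
  rw [← hf0, ← hja] at ha
  rw [← hf0, ← hjb] at hb
  rw [← hf0, ← hjc] at hc
  obtain ⟨τ, hocc⟩ := exists_pattOccursAt α f.strictMono
  have h₁ := (hocc.2 ja 0).2 ha
  have h₂ := (hocc.2 0 jb).2 hb
  have h₃ := (hocc.2 0 jc).2 hc
  have h₄ : τ jb ≠ τ jc := fun h => hbc (by rw [← hjb, ← hjc, τ.injective h])
  refine ⟨τ, fun j hj => ?_, f, hocc⟩
  obtain rfl : j = 0 := Fin.ext hj
  -- in `Fin 4`, a value with one value below it and two distinct values above it is `1`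
  have := (τ jb).isLt; have := (τ jc).isLt
  simp only [Fin.lt_def, ne_eq, Fin.ext_iff] at h₁ h₂ h₃ h₄ ⊢
  omega

theorem avoids_Tkm_four_two_iff {n : ℕ} (α : Equiv.Perm (Fin n)) :
    (∀ τ ∈ Tkm 4 2, Avoids τ α) ↔ NoBelowTwoAbove α := by
  refine ⟨fun h i a b c hia hib hic ha hb hc => ?_, fun h => ?_⟩
  · by_contra hbc
    obtain ⟨τ, hτ, hcont⟩ := exists_mem_Tkm_contains hia hib hic ha hb hc hbc
    exact h τ hτ hcont
  · rintro τ hτ ⟨f, hf, hiff⟩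
    have hτ0 : τ 0 = 1 := Fin.ext (by have := hτ 0 rfl; omega)
    have h0 : τ.symm 1 = 0 := by rw [← hτ0, τ.symm_apply_apply]
    have hpos (v : Fin 4) (hv : v ≠ 1) : f (τ.symm 1) < f (τ.symm v) :=
      hf (h0 ▸ Fin.pos_of_ne_zero fun hv0 => hv (by rw [← hτ0, ← hv0, Equiv.apply_symm_apply]))
    have hlt (u v : Fin 4) : u < v ↔ α (f (τ.symm u)) < α (f (τ.symm v)) := by
      simpa using hiff (τ.symm u) (τ.symm v)
    have key := h _ _ _ _ (hpos 0 (by decide)) (hpos 2 (by decide)) (hpos 3 (by decide))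
    simp only [← hlt] at key
    exact absurd (τ.symm.injective (hf.injective (key (by decide) (by decide) (by decide))))
      (by decide)

noncomputable def consPerm {n : ℕ} (p : Fin (n + 1)) (β : Equiv.Perm (Fin n)) :
    Equiv.Perm (Fin (n + 1)) :=
  Equiv.ofBijective (Fin.cons p (p.succAbove ∘ β)) <| Finite.injective_iff_bijective.1 <|
    Fin.cons_injective_iff.2
      ⟨fun ⟨i, hi⟩ => Fin.succAbove_ne p (β i) hi, p.succAbove_right_injective.comp β.injective⟩

section consPerm

variable {n : ℕ}

@[simp] theorem consPerm_zero (p : Fin (n + 1)) (β : Equiv.Perm (Fin n)) : consPerm p β 0 = p :=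
  rfl

@[simp] theorem consPerm_succ (p : Fin (n + 1)) (β : Equiv.Perm (Fin n)) (i : Fin n) :
    consPerm p β i.succ = p.succAbove (β i) :=
  rfl

theorem consPerm_injective2 : Function.Injective fun q : Fin (n + 1) × Equiv.Perm (Fin n) =>
    consPerm q.1 q.2 := by
  rintro ⟨p, β⟩ ⟨p', β'⟩ h
  obtain rfl : p = p' := by simpa using congrArg (· 0) h
  have hβ : β = β' := Equiv.ext fun i =>
    p.succAbove_right_injective (by simpa using congrArg (· i.succ) h)
  rw [hβ]

theorem consPerm_bijective2 : Function.Bijective fun q : Fin (n + 1) × Equiv.Perm (Fin n) =>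
    consPerm q.1 q.2 :=
  (Fintype.bijective_iff_injective_and_card _).2
    ⟨consPerm_injective2, by simp [Fintype.card_perm, Nat.factorial_succ]⟩

theorem noBelowTwoAboveAt_zero_iff (α : Equiv.Perm (Fin (n + 1))) :
    NoBelowTwoAboveAt α 0 ↔ (α 0 : ℕ) = 0 ∨ n ≤ α 0 + 1 := by
  constructor
  · intro h
    by_contra! hp
    have hpos (v : Fin (n + 1)) (hv : v ≠ α 0) : 0 < α.symm v :=
      Fin.pos_of_ne_zero fun h0 => hv (by rw [← h0, Equiv.apply_symm_apply])
    have key := h _ _ (α.symm ⟨n - 1, by omega⟩) (hpos 0 (by simp [Fin.ext_iff]; omega))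
      (hpos (Fin.last n) (by simp [Fin.ext_iff]; omega)) (hpos _ (by simp [Fin.ext_iff]; omega))
    simp only [Equiv.apply_symm_apply, EmbeddingLike.apply_eq_iff_eq, Fin.lt_def,
      Fin.ext_iff, Fin.val_last, Fin.val_zero] at key
    omega
  · rintro hp a b c - - - ha hb hc
    refine α.injective (Fin.ext ?_)
    have := (α b).isLt; have := (α c).isLt
    rw [Fin.lt_def] at ha hb hc
    omega

theorem noBelowTwoAboveAt_consPerm_succ (p : Fin (n + 1)) (β : Equiv.Perm (Fin n)) (i : Fin n) :
    NoBelowTwoAboveAt (consPerm p β) i.succ ↔ NoBelowTwoAboveAt β i := by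
  simp [NoBelowTwoAboveAt, Fin.forall_fin_succ, Fin.succAbove_lt_succAbove_iff]

theorem noBelowTwoAbove_consPerm_iff (p : Fin (n + 1)) (β : Equiv.Perm (Fin n)) :
    NoBelowTwoAbove (consPerm p β) ↔ ((p : ℕ) = 0 ∨ n ≤ p + 1) ∧ NoBelowTwoAbove β := by
  simp only [NoBelowTwoAbove, Fin.forall_fin_succ, noBelowTwoAboveAt_zero_iff, consPerm_zero,
    noBelowTwoAboveAt_consPerm_succ]

end consPerm

theorem ncard_noBelowTwoAbove_succ (n : ℕ) :
    {α : Equiv.Perm (Fin (n + 1)) | NoBelowTwoAbove α}.ncard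
      = {p : Fin (n + 1) | (p : ℕ) = 0 ∨ n ≤ p + 1}.ncard
        * {β : Equiv.Perm (Fin n) | NoBelowTwoAbove β}.ncard := by
  rw [← Set.ncard_prod, ← Set.ncard_preimage_of_injective_subset_range consPerm_injective2
    (s := {α | NoBelowTwoAbove α}) (by simp [consPerm_bijective2.surjective.range_eq])]
  congr 1
  ext ⟨p, β⟩
  exact noBelowTwoAbove_consPerm_iff p β

theorem ncard_val_eq_zero_or_add_two_le (m : ℕ) :
    {p : Fin (m + 3) | (p : ℕ) = 0 ∨ m + 2 ≤ p + 1}.ncard = 3 := by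
  refine Set.ncard_eq_three.2 ⟨0, ⟨m + 1, by omega⟩, ⟨m + 2, by omega⟩, ?_, ?_, ?_, ?_⟩
  · simp [Fin.ext_iff]
  · simp [Fin.ext_iff]
  · simp [Fin.ext_iff]
  · ext p
    simp only [Set.mem_ofPred_eq, Set.mem_insert_iff, Set.mem_singleton_iff, Fin.ext_iff,
      Fin.val_zero]
    omega

theorem noBelowTwoAbove_of_fin_two (α : Equiv.Perm (Fin 2)) : NoBelowTwoAbove α := by
  intro i a b c _ hib hic _ _ _
  omega

theorem ncard_noBelowTwoAbove (m : ℕ) :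
    {α : Equiv.Perm (Fin (m + 2)) | NoBelowTwoAbove α}.ncard = 2 * 3 ^ m := by
  induction m with
  | zero => simp [noBelowTwoAbove_of_fin_two, Fintype.card_perm]
  | succ m ih => rw [ncard_noBelowTwoAbove_succ, ncard_val_eq_zero_or_add_two_le, ih]; ring

theorem stmt19 (n : ℕ) (hn : 4 ≤ n) :
    Set.ncard {α : Equiv.Perm (Fin n) | ∀ τ ∈ Tkm 4 2, Avoids τ α}
      = 2 * 3 ^ (n - 2) := by
  obtain ⟨m, rfl⟩ : ∃ m, n = m + 2 := ⟨n - 2, by omega⟩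
  simp only [avoids_Tkm_four_two_iff, ncard_noBelowTwoAbove, Nat.add_sub_cancel]
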